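/- Let n ≥ 2 and let I_s : (−1,1) → ℝ be the function I_s(δ) = ∫₀¹ sin(2πw)(1 − δ sin(2πw))^{−3/2} dw. Suppose r₁, …, r_n : [0, T) → ℝ and h₁, …, h_n : [0, T) → ℝ are differentiable with r_i(t) > 0 for all i and t, and suppose the radii satisfy r_i'(t) = −2π Σ_{j ≠ i} r_j z_{ij} I_s(δ_{ij}) / (r_i² + r_j² + z_{ij}²)^{3/2}, where z_{ij} = h_i − h_j and δ_{ij} = 2 r_i r_j / (r_i² + r_j² + z_{ij}²). Then t ↦ Σ_{i=1}^n r_i(t)² is constant on [0, T); i.e. the flow of vertically concentric circles preserves the total enclosed area Σ_{i=1}^n π r_i(t)². -/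

import Mathlib

/-!
`d/dt ∑ rᵢ² = 2 ∑ᵢ rᵢ rᵢ' = -4π ∑_{i ≠ j} rᵢ rⱼ zᵢⱼ I_s(δᵢⱼ) / (rᵢ² + rⱼ² + zᵢⱼ²)^{3/2}`, and the
summand is antisymmetric in `(i, j)`: `zᵢⱼ` changes sign while `δᵢⱼ` and the denominator do not.
So the derivative vanishes, and a function with zero derivative on an interval is constant there.
-/

noncomputable section

open Real

/-- The parametric integral `I_s(δ)`. -/
def Is (δ : ℝ) : ℝ :=
  ∫ w in (0:ℝ)..1, Real.sin (2 * π * w) / (1 - δ * Real.sin (2 * π * w)) ^ ((3:ℝ)/2)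

open Finset

theorem Finset.sum_sum_eq_zero_of_antisymm {ι M : Type*} [AddCommGroup M] [IsAddTorsionFree M]
    (s : Finset ι) {G : ι → ι → M} (hG : ∀ i j, G i j = -G j i) :
    ∑ i ∈ s, ∑ j ∈ s, G i j = 0 := by
  rw [← self_eq_neg]
  calc ∑ i ∈ s, ∑ j ∈ s, G i j = ∑ j ∈ s, ∑ i ∈ s, G i j := sum_comm
    _ = -∑ j ∈ s, ∑ i ∈ s, G j i := by
      simp only [← sum_neg_distrib]
      exact sum_congr rfl fun j _ => sum_congr rfl fun i _ => hG i j

theorem Finset.sum_sum_erase_eq_zero_of_antisymm {ι M : Type*} [DecidableEq ι] [AddCommGroup M]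
    [IsAddTorsionFree M] (s : Finset ι) {G : ι → ι → M} (hG : ∀ i j, G i j = -G j i) :
    ∑ i ∈ s, ∑ j ∈ s.erase i, G i j = 0 := by
  have hdiag : ∀ i, G i i = 0 := fun i => self_eq_neg.mp (hG i i)
  simp only [sum_erase s (hdiag _)]
  exact s.sum_sum_eq_zero_of_antisymm hG

theorem Convex.is_const_of_hasDerivWithinAt_zero {𝕜 G : Type*} [RCLike 𝕜] [NormedAddCommGroup G]
    [NormedSpace 𝕜 G] {f : 𝕜 → G} {s : Set 𝕜} {x y : 𝕜} (hs : Convex ℝ s)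
    (hf : ∀ x ∈ s, HasDerivWithinAt f 0 s x) (hx : x ∈ s) (hy : y ∈ s) : f x = f y := by
  have h := hs.norm_image_sub_le_of_norm_hasDerivWithin_le hf (fun _ _ => norm_zero.le) hy hx
  rwa [zero_mul, norm_le_zero_iff, sub_eq_zero] at h

/-- Circle `i` moves by `rᵢ' = -2π ∑_{j ≠ i} radialInteraction rᵢ rⱼ zᵢⱼ`. -/
def radialInteraction (ri rj z : ℝ) : ℝ :=
  rj * z * Is (2 * ri * rj / (ri ^ 2 + rj ^ 2 + z ^ 2)) / (ri ^ 2 + rj ^ 2 + z ^ 2) ^ ((3:ℝ)/2)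

theorem mul_radialInteraction_antisymm (a b z : ℝ) :
    a * radialInteraction a b z = -(b * radialInteraction b a (-z)) := by
  unfold radialInteraction
  rw [neg_sq, add_comm (b ^ 2), mul_right_comm 2 b a]
  ring

theorem n_circles_area_conservation_general
    (n : ℕ) (T : ℝ) (r h : Fin n → ℝ → ℝ)
    (hr : ∀ i : Fin n, ∀ t ∈ Set.Ico (0:ℝ) T,
      HasDerivWithinAt (r i)
        (-(2 * π) * ∑ j ∈ Finset.univ.erase i,
          r j t * (h i t - h j t)
            * Is (2 * r i t * r j t / (r i t ^ 2 + r j t ^ 2 + (h i t - h j t) ^ 2))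
            / (r i t ^ 2 + r j t ^ 2 + (h i t - h j t) ^ 2) ^ ((3:ℝ)/2))
        (Set.Ico (0:ℝ) T) t) :
    ∀ t ∈ Set.Ico (0:ℝ) T,
      (∑ i : Fin n, r i t ^ 2) = ∑ i : Fin n, r i 0 ^ 2
      ∧ (∑ i : Fin n, π * r i t ^ 2) = ∑ i : Fin n, π * r i 0 ^ 2 := by
  intro t ht
  have h0 : (0:ℝ) ∈ Set.Ico 0 T := ⟨le_rfl, ht.1.trans_lt ht.2⟩
  have hconst : ∑ i, r i t ^ 2 = ∑ i, r i 0 ^ 2 := by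
    refine (convex_Ico 0 T).is_const_of_hasDerivWithinAt_zero (f := fun t => ∑ i, r i t ^ 2)
      (fun u hu => ?_) ht h0
    convert HasDerivWithinAt.fun_sum fun i _ => (hr i u hu).fun_pow 2 using 1
    calc (0:ℝ)
        = -(4 * π) * ∑ i, ∑ j ∈ univ.erase i,
            r i u * radialInteraction (r i u) (r j u) (h i u - h j u) := by
          rw [sum_sum_erase_eq_zero_of_antisymm _ fun i j => by
            rw [mul_radialInteraction_antisymm, neg_sub], mul_zero]
      _ = _ := by
          simp only [mul_sum, radialInteraction]
          refine sum_congr rfl fun i _ => sum_congr rfl fun j _ => ?_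
          push_cast
          ring
  exact ⟨hconst, by simp only [← mul_sum, hconst]⟩

theorem n_circles_area_conservation
    (n : ℕ) (hn : 2 ≤ n) (T : ℝ) (r h : Fin n → ℝ → ℝ)
    (hrpos : ∀ i : Fin n, ∀ t ∈ Set.Ico (0:ℝ) T, 0 < r i t)
    (hr : ∀ i : Fin n, ∀ t ∈ Set.Ico (0:ℝ) T,
      HasDerivWithinAt (r i)
        (-(2 * π) * ∑ j ∈ Finset.univ.erase i,
          r j t * (h i t - h j t)
            * Is (2 * r i t * r j t / (r i t ^ 2 + r j t ^ 2 + (h i t - h j t) ^ 2))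
            / (r i t ^ 2 + r j t ^ 2 + (h i t - h j t) ^ 2) ^ ((3:ℝ)/2))
        (Set.Ico (0:ℝ) T) t)
    (hh : ∀ i : Fin n, ∀ t ∈ Set.Ico (0:ℝ) T,
      DifferentiableWithinAt ℝ (h i) (Set.Ico (0:ℝ) T) t) :
    ∀ t ∈ Set.Ico (0:ℝ) T,
      (∑ i : Fin n, r i t ^ 2) = ∑ i : Fin n, r i 0 ^ 2
      ∧ (∑ i : Fin n, π * r i t ^ 2) = ∑ i : Fin n, π * r i 0 ^ 2 :=
  n_circles_area_conservation_general n T r h hr
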